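/- Let p be an odd prime, G = GL₂(𝔽_p), N and N' the normalizers of the split and nonsplit Cartan subgroups. The eigenvalue of the composite operator NN' × N'N on the trivial component U₁ of ℂ[G/N] equals (p² − 1)/4. -/

import Mathlib

open Matrix Pointwise
open scoped Classical

noncomputable section

abbrev GL2 (p : ℕ) := GL (Fin 2) (ZMod p)

namespace Chen

variable (p : ℕ)

/-- The Borel subgroup of upper triangular matrices in `GL₂(𝔽_p)`. -/
def Bor : Subgroup (GL2 p) where
  carrier := {g | (g : Matrix (Fin 2) (Fin 2) (ZMod p)) 1 0 = 0}
  one_mem' := by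
    show ((1 : GL2 p) : Matrix (Fin 2) (Fin 2) (ZMod p)) 1 0 = 0
    simp [Matrix.one_apply]
  mul_mem' := by
    intro a b ha hb
    show ((a * b : GL2 p) : Matrix (Fin 2) (Fin 2) (ZMod p)) 1 0 = 0
    simp only [Set.mem_setOf_eq] at ha hb
    rw [Units.val_mul, Matrix.mul_apply, Fin.sum_univ_two, ha, hb]
    ring
  inv_mem' := by
    intro a ha
    show ((a⁻¹ : GL2 p) : Matrix (Fin 2) (Fin 2) (ZMod p)) 1 0 = 0
    simp only [Set.mem_setOf_eq] at ha
    rw [Matrix.coe_units_inv, Matrix.inv_def]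
    simp [Matrix.adjugate_fin_two, ha]

/-- The split (diagonal) Cartan subgroup of `GL₂(𝔽_p)`. -/
def Cs : Subgroup (GL2 p) where
  carrier := {g | (g : Matrix (Fin 2) (Fin 2) (ZMod p)) 0 1 = 0 ∧
      (g : Matrix (Fin 2) (Fin 2) (ZMod p)) 1 0 = 0}
  one_mem' := by
    constructor <;>
    · show ((1 : GL2 p) : Matrix (Fin 2) (Fin 2) (ZMod p)) _ _ = 0
      simp [Matrix.one_apply]
  mul_mem' := by
    intro a b ha hb
    simp only [Set.mem_setOf_eq] at ha hb ⊢
    constructor <;>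
    · show ((a * b : GL2 p) : Matrix (Fin 2) (Fin 2) (ZMod p)) _ _ = 0
      rw [Units.val_mul, Matrix.mul_apply, Fin.sum_univ_two]
      simp [ha.1, ha.2, hb.1, hb.2]
  inv_mem' := by
    intro a ha
    simp only [Set.mem_setOf_eq] at ha ⊢
    constructor <;>
    · show ((a⁻¹ : GL2 p) : Matrix (Fin 2) (Fin 2) (ZMod p)) _ _ = 0
      rw [Matrix.coe_units_inv, Matrix.inv_def]
      simp [Matrix.adjugate_fin_two, ha.1, ha.2]

/-- A (generalized) Cartan subgroup `{[[x, u*y],[y, x]]}` of `GL₂(𝔽_p)`;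
for `u = λ` a non-square this is the nonsplit Cartan `C'`, for `u = 1` the split Cartan `C''`. -/
def Cgen (u : ZMod p) : Subgroup (GL2 p) where
  carrier := {g | (g : Matrix (Fin 2) (Fin 2) (ZMod p)) 0 0 =
      (g : Matrix (Fin 2) (Fin 2) (ZMod p)) 1 1 ∧
      (g : Matrix (Fin 2) (Fin 2) (ZMod p)) 0 1 =
      u * (g : Matrix (Fin 2) (Fin 2) (ZMod p)) 1 0}
  one_mem' := by
    constructor <;> simp [Matrix.one_apply]
  mul_mem' := by
    intro a b ha hb
    simp only [Set.mem_setOf_eq] at ha hb ⊢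
    obtain ⟨ha1, ha2⟩ := ha
    obtain ⟨hb1, hb2⟩ := hb
    constructor <;>
    · show ((a * b : GL2 p) : Matrix (Fin 2) (Fin 2) (ZMod p)) _ _ =
        _
      simp only [Units.val_mul, Matrix.mul_apply, Fin.sum_univ_two]
      rw [ha1, ha2, hb1, hb2]
      ring
  inv_mem' := by
    intro a ha
    simp only [Set.mem_setOf_eq] at ha ⊢
    obtain ⟨ha1, ha2⟩ := ha
    constructor <;>
    · show ((a⁻¹ : GL2 p) : Matrix (Fin 2) (Fin 2) (ZMod p)) _ _ = _
      rw [Matrix.coe_units_inv, Matrix.inv_def]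
      simp [Matrix.adjugate_fin_two, ha1, ha2]
      try ring

/-- `N`, the normalizer of the split (diagonal) Cartan subgroup. -/
def Nspl : Subgroup (GL2 p) := Subgroup.normalizer (Cs p : Set (GL2 p))

/-- `N'`, the normalizer of the nonsplit Cartan subgroup (for `λ` a non-square). -/
def Nns (lam : ZMod p) : Subgroup (GL2 p) := Subgroup.normalizer (Cgen p lam : Set (GL2 p))

/-- `N''`, the normalizer of the split Cartan `C'' = {[[x,y],[y,x]]}`. -/
def Nspl' : Subgroup (GL2 p) := Subgroup.normalizer (Cgen p 1 : Set (GL2 p))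

/-- The double coset `N σ_t N` where `σ_t = [[1,1],[1,t]]`. -/
def dosetN (t : ZMod p) : Set (GL2 p) :=
  {g | ∃ a ∈ Nspl p, ∃ b ∈ Nspl p,
    ((a⁻¹ * g * b⁻¹ : GL2 p) : Matrix (Fin 2) (Fin 2) (ZMod p)) = !![1, 1; 1, t]}

/-- The double coset operator `ℝ[G/H] → ℝ[G/K]` (coefficients in `R`) attached to a
left-`H`-invariant, right-`K`-invariant set `S ⊆ G`: the basis vector `xH` is sent to the
sum of the `K`-cosets contained in `x·S`. -/
def T (R : Type) [CommRing R] {G : Type} [Group G] [Fintype G] (H K : Subgroup G)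
    (S : Set G) : ((G ⧸ H) → R) →ₗ[R] ((G ⧸ K) → R) where
  toFun v c := ∑ d : G ⧸ H,
    v d * (if c ∈ QuotientGroup.mk '' ((Quotient.out d) • S) then 1 else 0)
  map_add' := by
    intro u v
    funext c
    simp only [Pi.add_apply]
    rw [← Finset.sum_add_distrib]
    refine Finset.sum_congr rfl fun d _ => ?_
    ring
  map_smul' := by
    intro a v
    funext c
    simp only [Pi.smul_apply, smul_eq_mul, RingHom.id_apply]
    rw [Finset.mul_sum]
    refine Finset.sum_congr rfl fun d _ => ?_
    ring

end Chen

section Aux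

open Pointwise
variable {G : Type} [Group G] [Fintype G]

omit [Fintype G] in
lemma mem_image_smul_iff' (H K : Subgroup G) (c : G ⧸ K) (d : G ⧸ H) :
    (c ∈ QuotientGroup.mk '' ((Quotient.out d) • ((H : Set G) * (K : Set G)))) ↔
    (Quotient.out d)⁻¹ * (Quotient.out c) ∈ ((H : Set G) * (K : Set G)) := by
  constructor
  · rintro ⟨x, ⟨s, hs, rfl⟩, hx⟩
    rw [show c = QuotientGroup.mk (Quotient.out c) from (QuotientGroup.out_eq' c).symm,
      QuotientGroup.eq] at hx
    obtain ⟨h, hh, k, hk, rfl⟩ := hs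
    have : (Quotient.out d)⁻¹ * Quotient.out c =
        h * (k * ((Quotient.out d • (h * k))⁻¹ * Quotient.out c)) := by
      simp [smul_eq_mul]; group
    rw [this]
    exact Set.mul_mem_mul hh (K.mul_mem hk hx)
  · rintro ⟨h, hh, k, hk, hx⟩
    refine ⟨Quotient.out d * (h * k), ⟨h * k, Set.mul_mem_mul hh hk, rfl⟩, ?_⟩
    rw [show c = QuotientGroup.mk (Quotient.out c) from (QuotientGroup.out_eq' c).symm,
      QuotientGroup.eq]
    have : (Quotient.out d * (h * k))⁻¹ * Quotient.out c
        = k⁻¹ * (h⁻¹ * ((Quotient.out d)⁻¹ * Quotient.out c)) := by group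
    rw [this, ← hx]
    have : k⁻¹ * (h⁻¹ * (h * k)) = 1 := by group
    rw [this]; exact K.one_mem

omit [Fintype G] in
lemma setOf_eq' (H K : Subgroup G) (x : G) :
    {d : G ⧸ H | (Quotient.out d)⁻¹ * x ∈ ((H : Set G) * (K : Set G))} =
    (fun z => x • z) '' (QuotientGroup.mk '' (K : Set G)) := by
  ext d
  simp only [Set.mem_setOf_eq, Set.mem_image, exists_exists_and_eq_and]
  constructor
  · rintro ⟨h, hh, k, hk, hx⟩
    refine ⟨k⁻¹, K.inv_mem hk, ?_⟩
    have hd : Quotient.out d = x * k⁻¹ * h⁻¹ := by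
      have hx' : h * k = (Quotient.out d)⁻¹ * x := hx
      have : Quotient.out d * (h * k) = x := by rw [hx']; group
      rw [← this]; group
    rw [MulAction.Quotient.smul_mk]
    show QuotientGroup.mk (x * k⁻¹) = d
    conv_rhs => rw [← QuotientGroup.out_eq' d]
    rw [QuotientGroup.eq, hd]
    have : (x * k⁻¹)⁻¹ * (x * k⁻¹ * h⁻¹) = h⁻¹ := by group
    rw [this]; exact H.inv_mem hh
  · rintro ⟨k, hk, rfl⟩
    rw [MulAction.Quotient.smul_mk]
    show (Quotient.out (QuotientGroup.mk (x * k) : G ⧸ H))⁻¹ * x ∈ _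
    obtain ⟨h, hout⟩ := QuotientGroup.mk_out_eq_mul H (x * k)
    rw [hout]
    have : (x * k * (h : G))⁻¹ * x = (h : G)⁻¹ * k⁻¹ := by group
    rw [this]
    exact Set.mul_mem_mul (H.inv_mem h.2) (K.inv_mem hk)

/-- Evaluation of the double coset operator `T` on constant functions. -/
lemma T_const (H K : Subgroup G) (cst : ℂ) (c : G ⧸ K) :
    (Chen.T ℂ H K ((H : Set G) * (K : Set G))) (fun _ => cst) c =
    (Nat.card (QuotientGroup.mk '' (K : Set G) : Set (G ⧸ H)) : ℂ) * cst := by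
  show (∑ d : G ⧸ H, cst * _) = _
  have : ∀ d : G ⧸ H,
      cst * (if c ∈ QuotientGroup.mk '' ((Quotient.out d) • ((H : Set G) * (K : Set G)))
        then (1:ℂ) else 0)
      = cst * (if d ∈ {d : G ⧸ H |
          (Quotient.out d)⁻¹ * (Quotient.out c) ∈ ((H : Set G) * (K : Set G))}
          then (1:ℂ) else 0) := by
    intro d
    congr 1
    simp only [Set.mem_setOf_eq, mem_image_smul_iff' H K c d]
  rw [Finset.sum_congr rfl (fun d _ => this d), ← Finset.mul_sum, Finset.sum_boole, mul_comm]
  congr 2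
  have hset : {d : G ⧸ H | (Quotient.out d)⁻¹ * (Quotient.out c) ∈ ((H : Set G) * (K : Set G))}
      = (fun z => (Quotient.out c) • z) '' (QuotientGroup.mk '' (K : Set G)) :=
    setOf_eq' H K (Quotient.out c)
  calc (Finset.univ.filter (fun d : G ⧸ H =>
        d ∈ {d : G ⧸ H | (Quotient.out d)⁻¹ * (Quotient.out c) ∈ ((H : Set G) * (K : Set G))})).card
      = Fintype.card {d : G ⧸ H //
        d ∈ {d : G ⧸ H | (Quotient.out d)⁻¹ * (Quotient.out c) ∈ ((H : Set G) * (K : Set G))}} :=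
        (Fintype.card_subtype _).symm
    _ = Nat.card {d : G ⧸ H |
        (Quotient.out d)⁻¹ * (Quotient.out c) ∈ ((H : Set G) * (K : Set G))} :=
        (Nat.card_eq_fintype_card).symm
    _ = Nat.card ((fun z => (Quotient.out c) • z) '' (QuotientGroup.mk '' (K : Set G))) :=
        Nat.card_congr (Equiv.setCongr hset)
    _ = Nat.card (QuotientGroup.mk '' (K : Set G) : Set (G ⧸ H)) :=
        Nat.card_image_of_injective (MulAction.injective (Quotient.out c)) _

/-- The image of `K` in `G ⧸ H` has cardinality `|K| / |H ⊓ K|`. -/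
lemma card_image_mk_mul_card_inf (H K : Subgroup G) :
    Nat.card (QuotientGroup.mk '' (K : Set G) : Set (G ⧸ H)) *
      Nat.card (H ⊓ K : Subgroup G) = Nat.card K := by
  classical
  set φ : K ⧸ (H.subgroupOf K) → G ⧸ H :=
    Quotient.map' Subtype.val (fun a b hab => by
      rw [QuotientGroup.leftRel_apply] at hab ⊢
      exact hab) with hφ
  have hinj : Function.Injective φ := by
    intro a b
    induction a using Quotient.inductionOn'
    induction b using Quotient.inductionOn'
    rename_i a b
    intro hab
    have : ((a : G)⁻¹ * b : G) ∈ H := by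
      rw [← QuotientGroup.leftRel_apply]
      exact Quotient.exact' hab
    apply Quotient.sound'
    rw [QuotientGroup.leftRel_apply, Subgroup.mem_subgroupOf]
    simpa using this
  have hrange : Set.range φ = (QuotientGroup.mk '' (K : Set G) : Set (G ⧸ H)) := by
    ext z
    constructor
    · rintro ⟨q, rfl⟩
      induction q using Quotient.inductionOn'
      rename_i a
      exact ⟨a, a.2, rfl⟩
    · rintro ⟨k, hk, rfl⟩
      exact ⟨Quotient.mk'' ⟨k, hk⟩, rfl⟩
  have h1 : Nat.card (QuotientGroup.mk '' (K : Set G) : Set (G ⧸ H)) =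
      Nat.card (K ⧸ (H.subgroupOf K)) := by
    rw [← hrange]
    exact (Nat.card_congr (Equiv.ofInjective φ hinj)).symm
  have h2 : Nat.card (H.subgroupOf K) = Nat.card (H ⊓ K : Subgroup G) := by
    rw [← Subgroup.inf_subgroupOf_right]
    exact Nat.card_congr (Subgroup.subgroupOfEquivOfLe inf_le_right).toEquiv
  rw [h1, ← h2, ← Subgroup.card_eq_card_quotient_mul_card_subgroup (H.subgroupOf K)]

end Aux


section GLfacts

open Chen

variable (p : ℕ) [Fact p.Prime]

abbrev M2 (p : ℕ) := Matrix (Fin 2) (Fin 2) (ZMod p)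

lemma mat_eq_iff {α : Type} (x y z t a b c d : α) :
    !![x,y;z,t] = !![a,b;c,d] ↔ (x = a ∧ y = b) ∧ (z = c ∧ t = d) := by
  constructor
  · intro h
    exact ⟨⟨congrFun (congrFun h 0) 0, congrFun (congrFun h 0) 1⟩,
      congrFun (congrFun h 1) 0, congrFun (congrFun h 1) 1⟩
  · rintro ⟨⟨rfl, rfl⟩, rfl, rfl⟩; rfl

/-- Build an element of `GL₂` from four entries with nonzero determinant. -/
def glmk (a b c d : ZMod p) (h : a * d - b * c ≠ 0) : GL2 p :=
  Matrix.GeneralLinearGroup.mkOfDetNeZero !![a, b; c, d]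
    (by rwa [Matrix.det_fin_two_of])

@[simp] lemma glmk_coe (a b c d : ZMod p) (h : a * d - b * c ≠ 0) :
    ((glmk p a b c d h : GL2 p) : M2 p) = !![a, b; c, d] := rfl

lemma det_ne (g : GL2 p) :
    (g : M2 p) 0 0 * (g : M2 p) 1 1 - (g : M2 p) 0 1 * (g : M2 p) 1 0 ≠ 0 := by
  have h : IsUnit ((g : M2 p).det) := by
    rw [← Matrix.isUnit_iff_isUnit_det]
    exact g.isUnit
  rw [Matrix.det_fin_two] at h
  exact h.ne_zero

lemma det_ne' (g : GL2 p) (a b c d : ZMod p) (hG : (g : M2 p) = !![a,b;c,d]) :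
    a * d - b * c ≠ 0 := by
  have h := det_ne p g
  rw [hG] at h
  simpa using h

lemma conj_rel (g h : GL2 p) :
    ((g * h * g⁻¹ : GL2 p) : M2 p) * (g : M2 p) = (g : M2 p) * (h : M2 p) := by
  have e : (g * h * g⁻¹) * g = g * h := by group
  calc ((g * h * g⁻¹ : GL2 p) : M2 p) * (g : M2 p)
      = (((g * h * g⁻¹) * g : GL2 p) : M2 p) := (Units.val_mul _ _).symm
    _ = ((g * h : GL2 p) : M2 p) := by rw [e]
    _ = (g : M2 p) * (h : M2 p) := Units.val_mul _ _

lemma mem_Cs_iff (h : GL2 p) :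
    h ∈ Cs p ↔ (h : M2 p) 0 1 = 0 ∧ (h : M2 p) 1 0 = 0 := Iff.rfl

lemma mem_Cgen_iff (u : ZMod p) (h : GL2 p) :
    h ∈ Cgen p u ↔ (h : M2 p) 0 0 = (h : M2 p) 1 1 ∧
      (h : M2 p) 0 1 = u * (h : M2 p) 1 0 := Iff.rfl

lemma two_ne (hodd : Odd p) : (2 : ZMod p) ≠ 0 := by
  have hp : p.Prime := Fact.out
  intro h
  have h2 : ((2 : ℕ) : ZMod p) = 0 := by exact_mod_cast h
  rw [ZMod.natCast_eq_zero_iff] at h2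
  have := (Nat.prime_dvd_prime_iff_eq hp Nat.prime_two).mp h2
  rcases hodd with ⟨k, hk⟩; omega

lemma neg_one_ne : (-1 : ZMod p) ≠ 0 := by
  simpa using (one_ne_zero : (1 : ZMod p) ≠ 0)

lemma mem_Nspl_iff (hodd : Odd p) (g : GL2 p) :
    g ∈ Nspl p ↔ ((g : M2 p) 0 1 = 0 ∧ (g : M2 p) 1 0 = 0) ∨
      ((g : M2 p) 0 0 = 0 ∧ (g : M2 p) 1 1 = 0) := by
  have h2 := two_ne p hodd
  obtain ⟨a, b, c, d, hG⟩ : ∃ a b c d, (g : M2 p) = !![a,b;c,d] :=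
    ⟨_, _, _, _, Matrix.eta_fin_two _⟩
  have hdet : a * d - b * c ≠ 0 := det_ne' p g a b c d hG
  have hgoal : (((g : M2 p) 0 1 = 0 ∧ (g : M2 p) 1 0 = 0) ∨
      ((g : M2 p) 0 0 = 0 ∧ (g : M2 p) 1 1 = 0)) ↔ ((b = 0 ∧ c = 0) ∨ (a = 0 ∧ d = 0)) := by
    rw [hG]; exact Iff.rfl
  rw [hgoal]
  set w : GL2 p := glmk p 1 0 0 (-1) (by simpa using neg_one_ne p) with hw'
  constructor
  · intro hg
    rw [Nspl, Subgroup.mem_normalizer_iff] at hg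
    have hwCs : w ∈ Cs p := by
      rw [mem_Cs_iff]
      exact ⟨rfl, rfl⟩
    have hu : g * w * g⁻¹ ∈ Cs p := (hg w).mp hwCs
    obtain ⟨x, y, z, t, hU⟩ : ∃ x y z t, ((g * w * g⁻¹ : GL2 p) : M2 p) = !![x,y;z,t] :=
      ⟨_, _, _, _, Matrix.eta_fin_two _⟩
    rw [mem_Cs_iff, hU] at hu
    have hy : y = 0 := hu.1
    have hz : z = 0 := hu.2
    subst hy; subst hz
    have E := conj_rel p g w
    rw [hU, hG, hw', glmk_coe, Matrix.mul_fin_two, Matrix.mul_fin_two, mat_eq_iff] at E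
    obtain ⟨⟨E1, E2⟩, E3, E4⟩ := E
    by_cases ha : a = 0
    · right
      subst ha
      have hcne : c ≠ 0 := fun hc => hdet (by rw [hc]; ring)
      have ht : t = 1 := mul_right_cancel₀ hcne (by linear_combination E3)
      subst ht
      have hd : 2 * d = 0 := by linear_combination E4
      rcases mul_eq_zero.mp hd with h | h
      · exact absurd h h2
      · exact ⟨rfl, h⟩
    · left
      have hx : x = 1 := mul_right_cancel₀ ha (by linear_combination E1)
      subst hx
      have hb : 2 * b = 0 := by linear_combination E2
      have hb0 : b = 0 := by
        rcases mul_eq_zero.mp hb with h | h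
        · exact absurd h h2
        · exact h
      subst hb0
      have hdne : d ≠ 0 := fun hd => hdet (by rw [hd]; ring)
      have ht : t = -1 := mul_right_cancel₀ hdne (by linear_combination E4)
      subst ht
      have hc : 2 * c = 0 := by linear_combination -E3
      rcases mul_eq_zero.mp hc with h | h
      · exact absurd h h2
      · exact ⟨rfl, h⟩
  · intro hcase
    rcases hcase with ⟨hb, hc⟩ | ⟨ha, hd⟩
    · -- diagonal
      subst hb; subst hc
      rw [Nspl, Subgroup.mem_normalizer_iff]
      intro h
      have hane : a ≠ 0 := fun h0 => hdet (by rw [h0]; ring)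
      have hdne : d ≠ 0 := fun h0 => hdet (by rw [h0]; ring)
      obtain ⟨e, f, k, l, hH⟩ : ∃ e f k l, (h : M2 p) = !![e,f;k,l] :=
        ⟨_, _, _, _, Matrix.eta_fin_two _⟩
      obtain ⟨x, y, z, t, hU⟩ : ∃ x y z t, ((g * h * g⁻¹ : GL2 p) : M2 p) = !![x,y;z,t] :=
        ⟨_, _, _, _, Matrix.eta_fin_two _⟩
      have E := conj_rel p g h
      rw [hU, hG, hH, Matrix.mul_fin_two, Matrix.mul_fin_two, mat_eq_iff] at E
      obtain ⟨⟨E1, E2⟩, E3, E4⟩ := E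
      rw [mem_Cs_iff, mem_Cs_iff, hH, hU]
      show (f = 0 ∧ k = 0) ↔ (y = 0 ∧ z = 0)
      constructor
      · rintro ⟨rfl, rfl⟩
        constructor
        · have hyd : y * d = 0 := by linear_combination E2
          rcases mul_eq_zero.mp hyd with h' | h'
          · exact h'
          · exact absurd h' hdne
        · have hza : z * a = 0 := by linear_combination E3
          rcases mul_eq_zero.mp hza with h' | h'
          · exact h'
          · exact absurd h' hane
      · rintro ⟨rfl, rfl⟩
        constructor
        · have haf : a * f = 0 := by linear_combination -E2
          rcases mul_eq_zero.mp haf with h' | h'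
          · exact absurd h' hane
          · exact h'
        · have hdk : d * k = 0 := by linear_combination -E3
          rcases mul_eq_zero.mp hdk with h' | h'
          · exact absurd h' hdne
          · exact h'
    · -- antidiagonal
      subst ha; subst hd
      rw [Nspl, Subgroup.mem_normalizer_iff]
      intro h
      have hbne : b ≠ 0 := fun h0 => hdet (by rw [h0]; ring)
      have hcne : c ≠ 0 := fun h0 => hdet (by rw [h0]; ring)
      obtain ⟨e, f, k, l, hH⟩ : ∃ e f k l, (h : M2 p) = !![e,f;k,l] :=
        ⟨_, _, _, _, Matrix.eta_fin_two _⟩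
      obtain ⟨x, y, z, t, hU⟩ : ∃ x y z t, ((g * h * g⁻¹ : GL2 p) : M2 p) = !![x,y;z,t] :=
        ⟨_, _, _, _, Matrix.eta_fin_two _⟩
      have E := conj_rel p g h
      rw [hU, hG, hH, Matrix.mul_fin_two, Matrix.mul_fin_two, mat_eq_iff] at E
      obtain ⟨⟨E1, E2⟩, E3, E4⟩ := E
      rw [mem_Cs_iff, mem_Cs_iff, hH, hU]
      show (f = 0 ∧ k = 0) ↔ (y = 0 ∧ z = 0)
      constructor
      · rintro ⟨rfl, rfl⟩
        constructor
        · have hyc : y * c = 0 := by linear_combination E1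
          rcases mul_eq_zero.mp hyc with h' | h'
          · exact h'
          · exact absurd h' hcne
        · have hzb : z * b = 0 := by linear_combination E4
          rcases mul_eq_zero.mp hzb with h' | h'
          · exact h'
          · exact absurd h' hbne
      · rintro ⟨rfl, rfl⟩
        constructor
        · have hcf : c * f = 0 := by linear_combination -E4
          rcases mul_eq_zero.mp hcf with h' | h'
          · exact absurd h' hcne
          · exact h'
        · have hbk : b * k = 0 := by linear_combination -E1
          rcases mul_eq_zero.mp hbk with h' | h'
          · exact absurd h' hbne
          · exact h'

lemma lam_ne_zero {lam : ZMod p} (hlam : ¬ IsSquare lam) : lam ≠ 0 :=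
  fun h => hlam ⟨0, by rw [h]; ring⟩

lemma sq_sub_ne {lam : ZMod p} (hlam : ¬ IsSquare lam) {x y : ZMod p}
    (h : ¬ (x = 0 ∧ y = 0)) : x^2 - lam * y^2 ≠ 0 := by
  intro h0
  by_cases hy : y = 0
  · subst hy
    apply h
    refine ⟨?_, rfl⟩
    have : x^2 = 0 := by linear_combination h0
    exact pow_eq_zero_iff (n := 2) (by norm_num) |>.mp this
  · apply hlam
    refine ⟨x / y, ?_⟩
    field_simp
    linear_combination -h0

lemma mem_Nns_iff (hodd : Odd p) {lam : ZMod p} (hlam : ¬ IsSquare lam) (g : GL2 p) :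
    g ∈ Nns p lam ↔
      ((g : M2 p) 0 0 = (g : M2 p) 1 1 ∧ (g : M2 p) 0 1 = lam * (g : M2 p) 1 0) ∨
      ((g : M2 p) 0 0 = -(g : M2 p) 1 1 ∧ (g : M2 p) 0 1 = -(lam * (g : M2 p) 1 0)) := by
  have h2 := two_ne p hodd
  have hl0 := lam_ne_zero p hlam
  obtain ⟨a, b, c, d, hG⟩ : ∃ a b c d, (g : M2 p) = !![a,b;c,d] :=
    ⟨_, _, _, _, Matrix.eta_fin_two _⟩
  have hdet : a * d - b * c ≠ 0 := det_ne' p g a b c d hG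
  have hgoal : ((((g : M2 p)) 0 0 = (g : M2 p) 1 1 ∧ (g : M2 p) 0 1 = lam * (g : M2 p) 1 0) ∨
      ((g : M2 p) 0 0 = -(g : M2 p) 1 1 ∧ (g : M2 p) 0 1 = -(lam * (g : M2 p) 1 0))) ↔
      ((a = d ∧ b = lam * c) ∨ (a = -d ∧ b = -(lam * c))) := by
    rw [hG]; exact Iff.rfl
  rw [hgoal]
  constructor
  · intro hg
    rw [Nns, Subgroup.mem_normalizer_iff] at hg
    set J : GL2 p := glmk p 0 lam 1 0 (by simpa using hl0) with hJ'
    have hJC : J ∈ Cgen p lam := by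
      rw [mem_Cgen_iff]
      exact ⟨rfl, by show lam = lam * 1; ring⟩
    have hu : g * J * g⁻¹ ∈ Cgen p lam := (hg J).mp hJC
    obtain ⟨x, y, z, t, hU⟩ : ∃ x y z t, ((g * J * g⁻¹ : GL2 p) : M2 p) = !![x,y;z,t] :=
      ⟨_, _, _, _, Matrix.eta_fin_two _⟩
    rw [mem_Cgen_iff, hU] at hu
    have hx : x = t := hu.1
    have hy : y = lam * z := hu.2
    subst hx; subst hy
    have E := conj_rel p g J
    rw [hU, hG, hJ', glmk_coe, Matrix.mul_fin_two, Matrix.mul_fin_two, mat_eq_iff] at E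
    obtain ⟨⟨E1, E2⟩, E3, E4⟩ := E
    -- E1 : x*a + lam*z*c = a*0 + b*1, E2 : x*b + lam*z*d = a*lam + b*0
    -- E3 : z*a + x*c = c*0 + d*1,     E4 : z*b + x*d = c*lam + d*0
    have hI : (a^2 - lam * c^2) * x = a * b - lam * (c * d) := by
      linear_combination a * E1 - lam * c * E3
    have hY1 : (a^2 - lam * c^2) * z = a * d - b * c := by
      linear_combination -c * E1 + a * E3
    have hII : (b^2 - lam * d^2) * x = lam * (a * b - lam * (c * d)) := by
      linear_combination b * E2 - lam * d * E4
    have hY2 : (b^2 - lam * d^2) * z = -(lam * (a * d - b * c)) := by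
      linear_combination -d * E2 + b * E4
    have hAne : a^2 - lam * c^2 ≠ 0 := by
      intro h0
      rw [h0, zero_mul] at hY1
      exact hdet hY1.symm
    have hzne : z ≠ 0 := by
      intro h0
      rw [h0, mul_zero] at hY1
      exact hdet hY1.symm
    have hBne : b^2 - lam * d^2 ≠ 0 := by
      intro h0
      rw [h0, zero_mul] at hY2
      exact (mul_ne_zero hl0 hdet) (by linear_combination hY2)
    have hfac : (a * b - lam * (c * d)) * ((b^2 - lam * d^2) - lam * (a^2 - lam * c^2)) = 0 := by
      linear_combination (a^2 - lam * c^2) * hII - (b^2 - lam * d^2) * hI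
    have hBlA : (b^2 - lam * d^2) - lam * (a^2 - lam * c^2) ≠ 0 := by
      intro h0
      have : 2 * (lam * (a * d - b * c)) = 0 := by
        linear_combination hY2 - lam * hY1 - z * h0
      rcases mul_eq_zero.mp this with h | h
      · exact h2 h
      · exact (mul_ne_zero hl0 hdet) h
    have hab : a * b - lam * (c * d) = 0 := by
      rcases mul_eq_zero.mp hfac with h | h
      · exact h
      · exact absurd h hBlA
    have hx0 : x = 0 := by
      have : (a^2 - lam * c^2) * x = 0 := by rw [hI, hab]
      rcases mul_eq_zero.mp this with h | h
      · exact absurd h hAne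
      · exact h
    subst hx0
    -- Now E1 : 0*a + lam*z*c = b, E2 : 0*b + lam*z*d = lam*a, E3 : z*a + 0*c = d, E4 : z*b = lam*c
    have hzd : z * d = a := by
      have : lam * (z * d) = lam * a := by linear_combination E2
      exact mul_left_cancel₀ hl0 this
    have hza : z * a = d := by linear_combination E3
    have haz : a * (z^2 - 1) = 0 := by linear_combination z * hza + hzd
    have hcz : c * (z^2 - 1) = 0 := by
      have h1 : lam * (z * c) = b := by linear_combination E1
      have h4 : z * b = lam * c := by linear_combination E4
      have : lam * (c * (z^2 - 1)) = 0 := by linear_combination z * h1 + h4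
      rcases mul_eq_zero.mp this with h | h
      · exact absurd h hl0
      · exact h
    have hz21 : z^2 - 1 = 0 := by
      by_contra hne
      have ha0 : a = 0 := by
        rcases mul_eq_zero.mp haz with h | h
        · exact h
        · exact absurd h hne
      have hc0 : c = 0 := by
        rcases mul_eq_zero.mp hcz with h | h
        · exact h
        · exact absurd h hne
      apply hdet
      have hd0 : d = 0 := by rw [← hza, ha0, mul_zero]
      have hb0 : b = 0 := by
        have := E1
        rw [ha0, hc0] at this
        linear_combination -this
      rw [ha0, hb0]; ring
    have hzpm : (z - 1) * (z + 1) = 0 := by linear_combination hz21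
    rcases mul_eq_zero.mp hzpm with h | h
    · -- z = 1
      have hz1 : z = 1 := by linear_combination h
      subst hz1
      left
      constructor
      · linear_combination hza
      · linear_combination -E1
    · -- z = -1
      have hz1 : z = -1 := by linear_combination h
      subst hz1
      right
      constructor
      · linear_combination -hza
      · linear_combination -E1
  · intro hcase
    rcases hcase with ⟨ha, hb⟩ | ⟨ha, hb⟩
    · -- g is in the nonsplit Cartan itself
      apply Subgroup.le_normalizer
      rw [mem_Cgen_iff, hG]
      exact ⟨ha, hb⟩
    · -- g = w * (element of Cartan) with w = diag(1,-1)
      set w : GL2 p := glmk p 1 0 0 (-1) (by simpa using neg_one_ne p) with hw'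
      have hwN : w ∈ Nns p lam := by
        rw [Nns, Subgroup.mem_normalizer_iff]
        intro h
        obtain ⟨e, f, k, l, hH⟩ : ∃ e f k l, (h : M2 p) = !![e,f;k,l] :=
          ⟨_, _, _, _, Matrix.eta_fin_two _⟩
        obtain ⟨x, y, z, t, hU⟩ : ∃ x y z t, ((w * h * w⁻¹ : GL2 p) : M2 p) = !![x,y;z,t] :=
          ⟨_, _, _, _, Matrix.eta_fin_two _⟩
        have E := conj_rel p w h
        rw [hU, hH, hw', glmk_coe, Matrix.mul_fin_two, Matrix.mul_fin_two, mat_eq_iff] at E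
        obtain ⟨⟨E1, E2⟩, E3, E4⟩ := E
        -- E1 : x*1 + y*0 = e,  E2 : x*0 + y*(-1) = f, E3 : z*1+t*0 = -k, E4 : t*(-1) = -l ...
        rw [mem_Cgen_iff, mem_Cgen_iff, hH, hU]
        show (e = l ∧ f = lam * k) ↔ (x = t ∧ y = lam * z)
        constructor
        · rintro ⟨h1, h2'⟩
          constructor
          · linear_combination E1 + h1 + E4
          · linear_combination -E2 - h2' - lam * E3
        · rintro ⟨h1, h2'⟩
          constructor
          · linear_combination -E1 + h1 - E4
          · linear_combination -E2 - h2' - lam * E3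
      have hwg : w * g ∈ Cgen p lam := by
        rw [mem_Cgen_iff]
        have hcoe : ((w * g : GL2 p) : M2 p) = (w : M2 p) * (g : M2 p) := Units.val_mul _ _
        rw [hcoe, hw', glmk_coe, hG, Matrix.mul_fin_two]
        show (1*a + 0*c = 0*b + -1*d) ∧ (1*b + 0*d = lam * (0*a + -1*c))
        constructor
        · linear_combination ha
        · linear_combination hb
      have : g = w⁻¹ * (w * g) := by group
      rw [this]
      exact (Nns p lam).mul_mem ((Nns p lam).inv_mem hwN)
        (Subgroup.le_normalizer hwg)

end GLfacts

section CardProofs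

open Chen

variable (p : ℕ) [Fact p.Prime]

lemma val_eq_iff {H : Subgroup (GL2 p)} (g h : H) :
    g = h ↔ ((g : GL2 p) : M2 p) = ((h : GL2 p) : M2 p) := by
  rw [Subtype.ext_iff, Units.ext_iff]

lemma card_Nspl' (hodd : Odd p) : Nat.card (Nspl p) = 2 * (p - 1)^2 := by
  have h2 := two_ne p hodd
  set f : (ZMod p)ˣ × (ZMod p)ˣ × Bool → ↥(Nspl p) := fun x =>
    Bool.rec
      (⟨glmk p x.1 0 0 x.2.1 (by simpa using mul_ne_zero x.1.ne_zero x.2.1.ne_zero),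
        (mem_Nspl_iff p hodd _).mpr (Or.inl ⟨rfl, rfl⟩)⟩ : ↥(Nspl p))
      (⟨glmk p 0 x.1 x.2.1 0 (by simpa using mul_ne_zero x.1.ne_zero x.2.1.ne_zero),
        (mem_Nspl_iff p hodd _).mpr (Or.inr ⟨rfl, rfl⟩)⟩ : ↥(Nspl p))
      x.2.2 with hf
  have hbij : Function.Bijective f := by
    constructor
    · rintro ⟨a, d, s⟩ ⟨a', d', s'⟩ h
      cases s <;> cases s' <;>
        rw [val_eq_iff] at h <;>
        simp only [hf, glmk_coe] at h <;>
        rw [mat_eq_iff] at h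
      · obtain ⟨⟨h1, -⟩, -, h4⟩ := h
        simp only [Prod.mk.injEq]
        exact ⟨Units.ext h1, Units.ext h4, trivial⟩
      · exact absurd h.1.1 a.ne_zero
      · exact absurd h.1.1.symm a'.ne_zero
      · obtain ⟨⟨-, h2'⟩, h3, -⟩ := h
        simp only [Prod.mk.injEq]
        exact ⟨Units.ext h2', Units.ext h3, trivial⟩
    · rintro ⟨g, hg⟩
      obtain ⟨a, b, c, d, hG⟩ : ∃ a b c d, (g : M2 p) = !![a,b;c,d] :=
        ⟨_, _, _, _, Matrix.eta_fin_two _⟩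
      have hdet : a * d - b * c ≠ 0 := det_ne' p g a b c d hG
      rw [mem_Nspl_iff p hodd, hG] at hg
      rcases hg with ⟨hb, hc⟩ | ⟨ha, hd⟩
      · replace hb : b = 0 := hb
        replace hc : c = 0 := hc
        subst hb; subst hc
        have ha : a ≠ 0 := fun h0 => hdet (by rw [h0]; ring)
        have hd : d ≠ 0 := fun h0 => hdet (by rw [h0]; ring)
        refine ⟨(Units.mk0 a ha, Units.mk0 d hd, false), ?_⟩
        rw [val_eq_iff]
        simp only [hf, glmk_coe, Units.val_mk0]
        rw [hG]
      · replace ha : a = 0 := ha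
        replace hd : d = 0 := hd
        subst ha; subst hd
        have hb : b ≠ 0 := fun h0 => hdet (by rw [h0]; ring)
        have hc : c ≠ 0 := fun h0 => hdet (by rw [h0]; ring)
        refine ⟨(Units.mk0 b hb, Units.mk0 c hc, true), ?_⟩
        rw [val_eq_iff]
        simp only [hf, glmk_coe, Units.val_mk0]
        rw [hG]
  rw [← Nat.card_congr (Equiv.ofBijective f hbij)]
  simp only [Nat.card_prod, Nat.card_eq_fintype_card, Fintype.card_prod, ZMod.card_units p, Fintype.card_bool]
  ring

lemma unit_two_mul (h2 : (2 : ZMod p) ≠ 0) (u : (ZMod p)ˣ)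
    (h : (2 : ZMod p) * (u : ZMod p) = 0) : False := by
  rcases mul_eq_zero.mp h with hc | hc
  · exact h2 hc
  · exact u.ne_zero hc

lemma unit_two_mul' (h2 : (2 : ZMod p) ≠ 0) {lam : ZMod p} (hl0 : lam ≠ 0) (u : (ZMod p)ˣ)
    (h : (2 : ZMod p) * (lam * (u : ZMod p)) = 0) : False := by
  rcases mul_eq_zero.mp h with hc | hc
  · exact h2 hc
  · exact (mul_ne_zero hl0 u.ne_zero) hc

lemma card_Nns' (hodd : Odd p) {lam : ZMod p} (hlam : ¬ IsSquare lam) :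
    Nat.card (Nns p lam) = 2 * (p^2 - 1) := by
  have h2 := two_ne p hodd
  have hl0 := lam_ne_zero p hlam
  set f : {v : ZMod p × ZMod p // v ≠ 0} × Bool → ↥(Nns p lam) := fun x =>
    Bool.rec
      (⟨glmk p x.1.1.1 (lam * x.1.1.2) x.1.1.2 x.1.1.1
          (fun h0 => sq_sub_ne p hlam
            (fun hz => x.1.2 (Prod.ext hz.1 hz.2)) (by linear_combination h0)),
        (mem_Nns_iff p hodd hlam _).mpr (Or.inl ⟨rfl, rfl⟩)⟩ : ↥(Nns p lam))
      (⟨glmk p x.1.1.1 (-(lam * x.1.1.2)) x.1.1.2 (-x.1.1.1)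
          (fun h0 => sq_sub_ne p hlam
            (fun hz => x.1.2 (Prod.ext hz.1 hz.2)) (by linear_combination -h0)),
        (mem_Nns_iff p hodd hlam _).mpr (Or.inr ⟨(neg_neg _).symm, rfl⟩)⟩ : ↥(Nns p lam))
      x.2 with hf
  have hbij : Function.Bijective f := by
    constructor
    · rintro ⟨⟨⟨x, y⟩, hv⟩, s⟩ ⟨⟨⟨x', y'⟩, hv'⟩, s'⟩ h
      rw [val_eq_iff] at h
      revert h
      cases s <;> cases s' <;> intro h <;> simp only [hf, glmk_coe] at h <;>
        rw [mat_eq_iff] at h <;> obtain ⟨⟨h1, hh2⟩, h3, h4⟩ := h <;>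
        simp only [Prod.mk.injEq, Subtype.mk.injEq]
      · exact ⟨⟨h1, h3⟩, trivial⟩
      · exfalso
        have hx0 : x = 0 := by
          have := mul_eq_zero.mp (show (2 : ZMod p) * x = 0 by linear_combination h1 + h4)
          rcases this with hc | hc
          · exact absurd hc h2
          · exact hc
        have hy0 : y = 0 := by
          have h5 : lam * y = 0 := by
            have := mul_eq_zero.mp
              (show (2 : ZMod p) * (lam * y) = 0 by linear_combination hh2 + lam * h3)
            rcases this with hc | hc
            · exact absurd hc h2
            · exact hc
          rcases mul_eq_zero.mp h5 with hc | hc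
          · exact absurd hc hl0
          · exact hc
        exact hv (Prod.ext hx0 hy0)
      · exfalso
        have hx0 : x = 0 := by
          have := mul_eq_zero.mp (show (2 : ZMod p) * x = 0 by linear_combination h1 - h4)
          rcases this with hc | hc
          · exact absurd hc h2
          · exact hc
        have hy0 : y = 0 := by
          have h5 : lam * y = 0 := by
            have := mul_eq_zero.mp
              (show (2 : ZMod p) * (lam * y) = 0 by linear_combination -hh2 + lam * h3)
            rcases this with hc | hc
            · exact absurd hc h2
            · exact hc
          rcases mul_eq_zero.mp h5 with hc | hc
          · exact absurd hc hl0
          · exact hc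
        exact hv (Prod.ext hx0 hy0)
      · exact ⟨⟨h1, h3⟩, trivial⟩
    · rintro ⟨g, hg⟩
      obtain ⟨a, b, c, d, hG⟩ : ∃ a b c d, (g : M2 p) = !![a,b;c,d] :=
        ⟨_, _, _, _, Matrix.eta_fin_two _⟩
      have hdet : a * d - b * c ≠ 0 := det_ne' p g a b c d hG
      rw [mem_Nns_iff p hodd hlam, hG] at hg
      rcases hg with ⟨ha, hb⟩ | ⟨ha, hb⟩
      · replace ha : a = d := ha
        replace hb : b = lam * c := hb
        have hv : ((a, c) : ZMod p × ZMod p) ≠ 0 := by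
          intro h0
          have ha0 : a = 0 := congrArg Prod.fst h0
          have hc0 : c = 0 := congrArg Prod.snd h0
          exact hdet (by rw [ha0, hc0]; ring)
        refine ⟨(⟨(a, c), hv⟩, false), ?_⟩
        rw [val_eq_iff]
        simp only [hf, glmk_coe]
        rw [hG]
        exact mat_eq_iff _ _ _ _ _ _ _ _ |>.mpr ⟨⟨rfl, hb.symm⟩, rfl, ha⟩
      · replace ha : a = -d := ha
        replace hb : b = -(lam * c) := hb
        have hv : ((a, c) : ZMod p × ZMod p) ≠ 0 := by
          intro h0
          have ha0 : a = 0 := congrArg Prod.fst h0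
          have hc0 : c = 0 := congrArg Prod.snd h0
          exact hdet (by rw [ha0, hc0]; ring)
        refine ⟨(⟨(a, c), hv⟩, true), ?_⟩
        rw [val_eq_iff]
        simp only [hf, glmk_coe]
        rw [hG]
        exact mat_eq_iff _ _ _ _ _ _ _ _ |>.mpr ⟨⟨rfl, hb.symm⟩, rfl, by linear_combination -ha⟩
  rw [← Nat.card_congr (Equiv.ofBijective f hbij)]
  have hsub : Fintype.card {v : ZMod p × ZMod p // v ≠ 0} = p^2 - 1 := by
    have hc := Fintype.card_subtype_compl (fun v : ZMod p × ZMod p => v = 0)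
    have he : Fintype.card {v : ZMod p × ZMod p // v = 0} = 1 := Fintype.card_subtype_eq 0
    have hall : Fintype.card (ZMod p × ZMod p) = p^2 := by
      rw [Fintype.card_prod, ZMod.card p]; ring
    calc Fintype.card {v : ZMod p × ZMod p // v ≠ 0}
        = Fintype.card {v : ZMod p × ZMod p // ¬ v = 0} := rfl
      _ = p^2 - 1 := by rw [hc, he, hall]
  simp only [Nat.card_prod, Nat.card_eq_fintype_card, Fintype.card_prod, Fintype.card_bool, hsub]
  ring

lemma card_inf' (hodd : Odd p) {lam : ZMod p} (hlam : ¬ IsSquare lam) :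
    Nat.card (Nspl p ⊓ Nns p lam : Subgroup (GL2 p)) = 4 * (p - 1) := by
  have h2 := two_ne p hodd
  have hl0 := lam_ne_zero p hlam
  set f : (ZMod p)ˣ × Bool × Bool → ↥(Nspl p ⊓ Nns p lam) := fun x =>
    Bool.rec
      -- t = false : diagonal
      (Bool.rec
        (⟨glmk p x.1 0 0 x.1 (by simpa using mul_ne_zero x.1.ne_zero x.1.ne_zero),
          Subgroup.mem_inf.mpr ⟨(mem_Nspl_iff p hodd _).mpr (Or.inl ⟨rfl, rfl⟩),
            (mem_Nns_iff p hodd hlam _).mpr (Or.inl ⟨rfl, (mul_zero lam).symm⟩)⟩⟩ :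
              ↥(Nspl p ⊓ Nns p lam))
        (⟨glmk p x.1 0 0 (-x.1)
            (fun h0 => mul_ne_zero x.1.ne_zero x.1.ne_zero (by linear_combination -h0)),
          Subgroup.mem_inf.mpr ⟨(mem_Nspl_iff p hodd _).mpr (Or.inl ⟨rfl, rfl⟩),
            (mem_Nns_iff p hodd hlam _).mpr
              (Or.inr ⟨(neg_neg _).symm, by show (0 : ZMod p) = -(lam * 0); ring⟩)⟩⟩ :
              ↥(Nspl p ⊓ Nns p lam))
        x.2.1)
      -- t = true : antidiagonal
      (Bool.rec
        (⟨glmk p 0 (lam * x.1) x.1 0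
            (fun h0 => mul_ne_zero hl0 (mul_ne_zero x.1.ne_zero x.1.ne_zero)
              (by linear_combination -h0)),
          Subgroup.mem_inf.mpr ⟨(mem_Nspl_iff p hodd _).mpr (Or.inr ⟨rfl, rfl⟩),
            (mem_Nns_iff p hodd hlam _).mpr (Or.inl ⟨rfl, rfl⟩)⟩⟩ :
              ↥(Nspl p ⊓ Nns p lam))
        (⟨glmk p 0 (-(lam * x.1)) x.1 0
            (fun h0 => mul_ne_zero hl0 (mul_ne_zero x.1.ne_zero x.1.ne_zero)
              (by linear_combination h0)),
          Subgroup.mem_inf.mpr ⟨(mem_Nspl_iff p hodd _).mpr (Or.inr ⟨rfl, rfl⟩),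
            (mem_Nns_iff p hodd hlam _).mpr (Or.inr ⟨neg_zero.symm, rfl⟩)⟩⟩ :
              ↥(Nspl p ⊓ Nns p lam))
        x.2.1)
      x.2.2 with hf
  have hbij : Function.Bijective f := by
    constructor
    · rintro ⟨x, s, t⟩ ⟨x', s', t'⟩ h
      rw [val_eq_iff] at h
      revert h
      cases s <;> cases s' <;> cases t <;> cases t' <;> intro h <;>
        simp only [hf, glmk_coe] at h <;>
        rw [mat_eq_iff] at h <;> obtain ⟨⟨h1, hh2⟩, h3, h4⟩ := h <;>
        first
        | exact Prod.ext (Units.ext h1) rfl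
        | exact Prod.ext (Units.ext h3) rfl
        | exact absurd h1 x.ne_zero
        | exact absurd h1.symm x'.ne_zero
        | exact (unit_two_mul p h2 x (by linear_combination h1 + h4)).elim
        | exact (unit_two_mul p h2 x (by linear_combination h1 - h4)).elim
        | exact (unit_two_mul' p h2 hl0 x (by linear_combination hh2 + lam * h3)).elim
        | exact (unit_two_mul' p h2 hl0 x (by linear_combination -hh2 + lam * h3)).elim
    · rintro ⟨g, hg⟩
      obtain ⟨a, b, c, d, hG⟩ : ∃ a b c d, (g : M2 p) = !![a,b;c,d] :=
        ⟨_, _, _, _, Matrix.eta_fin_two _⟩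
      have hdet : a * d - b * c ≠ 0 := det_ne' p g a b c d hG
      rw [Subgroup.mem_inf, mem_Nspl_iff p hodd, mem_Nns_iff p hodd hlam, hG] at hg
      obtain ⟨hgN, hgC⟩ := hg
      rcases hgN with ⟨hb, hc⟩ | ⟨ha, hd⟩
      · replace hb : b = 0 := hb
        replace hc : c = 0 := hc
        have hane : a ≠ 0 := fun h0 => hdet (by rw [h0, hb]; ring)
        rcases hgC with ⟨h00, h01⟩ | ⟨h00, h01⟩
        · replace h00 : a = d := h00
          refine ⟨(Units.mk0 a hane, false, false), ?_⟩
          rw [val_eq_iff]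
          simp only [hf, glmk_coe, Units.val_mk0]
          rw [hG]
          exact mat_eq_iff _ _ _ _ _ _ _ _ |>.mpr ⟨⟨rfl, hb.symm⟩, hc.symm, h00⟩
        · replace h00 : a = -d := h00
          refine ⟨(Units.mk0 a hane, true, false), ?_⟩
          rw [val_eq_iff]
          simp only [hf, glmk_coe, Units.val_mk0]
          rw [hG]
          exact mat_eq_iff _ _ _ _ _ _ _ _ |>.mpr
            ⟨⟨rfl, hb.symm⟩, hc.symm, by linear_combination -h00⟩
      · replace ha : a = 0 := ha
        replace hd : d = 0 := hd
        have hcne : c ≠ 0 := fun h0 => hdet (by rw [h0, ha]; ring)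
        rcases hgC with ⟨h00, h01⟩ | ⟨h00, h01⟩
        · replace h01 : b = lam * c := h01
          refine ⟨(Units.mk0 c hcne, false, true), ?_⟩
          rw [val_eq_iff]
          simp only [hf, glmk_coe, Units.val_mk0]
          rw [hG]
          exact mat_eq_iff _ _ _ _ _ _ _ _ |>.mpr ⟨⟨ha.symm, h01.symm⟩, rfl, hd.symm⟩
        · replace h01 : b = -(lam * c) := h01
          refine ⟨(Units.mk0 c hcne, true, true), ?_⟩
          rw [val_eq_iff]
          simp only [hf, glmk_coe, Units.val_mk0]
          rw [hG]
          exact mat_eq_iff _ _ _ _ _ _ _ _ |>.mpr ⟨⟨ha.symm, h01.symm⟩, rfl, hd.symm⟩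
  rw [← Nat.card_congr (Equiv.ofBijective f hbij)]
  simp only [Nat.card_prod, Nat.card_eq_fintype_card, Fintype.card_prod, ZMod.card_units p,
    Fintype.card_bool]
  ring


end CardProofs



open Chen in
/-- **Proposition 11.1.** The eigenvalue of the composite operator
`NN' × N'N : ℂ[G/N] → ℂ[G/N'] → ℂ[G/N]` on the trivial component `U₁` of `ℂ[G/N]`
(the constants) equals `(p² − 1)/4`. -/
theorem NNprime_trivial_eigenvalue (p : ℕ) [Fact p.Prime] (hodd : Odd p)
    (lam : ZMod p) (hlam : ¬ IsSquare lam) :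
    ∀ cst : ℂ,
      ((T ℂ (Nns p lam) (Nspl p) ((Nns p lam : Set (GL2 p)) * (Nspl p : Set (GL2 p)))).comp
        (T ℂ (Nspl p) (Nns p lam) ((Nspl p : Set (GL2 p)) * (Nns p lam : Set (GL2 p))))) (fun _ => cst) =
      fun _ => (((p : ℂ) ^ 2 - 1) / 4) * cst := by
  intro cst
  have hp2 : 2 ≤ p := (Fact.out : p.Prime).two_le
  have hp3 : 3 ≤ p := by
    rcases hodd with ⟨k, hk⟩
    omega
  set N := Nspl p
  set N' := Nns p lam
  set m₁ : ℕ := Nat.card (QuotientGroup.mk '' (N' : Set (GL2 p)) : Set (GL2 p ⧸ N))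
  set m₂ : ℕ := Nat.card (QuotientGroup.mk '' (N : Set (GL2 p)) : Set (GL2 p ⧸ N'))
  have h1 : m₁ * Nat.card (N ⊓ N' : Subgroup (GL2 p)) = Nat.card N' :=
    card_image_mk_mul_card_inf N N'
  have h2 : m₂ * Nat.card (N ⊓ N' : Subgroup (GL2 p)) = Nat.card N := by
    rw [inf_comm]
    exact card_image_mk_mul_card_inf N' N
  rw [card_inf' p hodd hlam] at h1 h2
  rw [card_Nns' p hodd hlam] at h1
  rw [card_Nspl' p hodd] at h2
  -- 4 * (m₁ * m₂) + 1 = p ^ 2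
  have key : 4 * (m₁ * m₂) + 1 = p ^ 2 := by
    obtain ⟨n, rfl⟩ : ∃ n, p = n + 1 := ⟨p - 1, by omega⟩
    have hn : 2 ≤ n := by omega
    have e1 : (n+1) - 1 = n := by omega
    have e2 : (n+1)^2 - 1 = n^2 + 2*n := by
      have : (n+1)^2 = n^2 + 2*n + 1 := by ring
      omega
    rw [e1] at h2
    rw [e1, e2] at h1
    have h3 : (4*(m₁*m₂)) * (4*n^2) = (n^2+2*n) * (4*n^2) := by
      have e3 : (4*(m₁*m₂)) * (4*n^2) = (m₁ * (4*n)) * (m₂ * (4*n)) := by ring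
      rw [e3, h1, h2]; ring
    have h5 : 4*(m₁*m₂) = n^2+2*n := by
      refine Nat.eq_of_mul_eq_mul_right ?_ h3
      have : 0 < n := by omega
      positivity
    have : (n+1)^2 = n^2+2*n+1 := by ring
    omega
  -- now the complex computation
  funext c
  simp only [LinearMap.comp_apply]
  have step1 : (T ℂ N N' ((N : Set (GL2 p)) * (N' : Set (GL2 p)))) (fun _ => cst)
      = fun _ => (m₁ : ℂ) * cst := by
    funext c'
    exact T_const N N' cst c'
  rw [step1]
  rw [T_const N' N ((m₁ : ℂ) * cst) c]
  have hc : ((4 * (m₁ * m₂) + 1 : ℕ) : ℂ) = ((p : ℂ))^2 := by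
    rw [key]; push_cast; ring
  push_cast at hc
  have : (m₂ : ℂ) * ((m₁ : ℂ) * cst) = (((p:ℂ)^2 - 1) / 4) * cst := by
    have h4 : (4:ℂ) ≠ 0 := by norm_num
    field_simp
    ring_nf
    ring_nf at hc
    linear_combination cst * hc
  exact this
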